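/- There is an absolute constant C such that for every δ > 0 there is N ∈ ℕ with the following property. Let G be a finite abelian group (written additively) of order n ≥ N, let k be an integer with k ≤ 50, let p be a real with n^{−1/700} ≤ p ≤ 1, and let R be a p-random subset of G. Then with probability at least 1 − δ the following holds. For every U ⊆ G with |U| ≤ p^{350}·n/C: (1) for every k-tuple (c₁,…,c_k) of elements of G that is a rainbow path-candidate, there exists v ∈ G such that the k+1 elements v, v−c₁, v−c₁−c₂, …, v−c₁−⋯−c_k are pairwise distinct and all lie in R ∖ U; (2) for every k-tuple (c₁,…,c_k) of elements of G that is a rainbow cycle-candidate, there exists v ∈ G such that the k elements v, v−c₁, v−c₁−c₂, …, v−c₁−⋯−c_{k−1} are pairwise distinct and all lie in R ∖ U (note v − c₁ − ⋯ − c_k = v, so these elements form a directed cycle with colour sequence (c₁,…,c_k)). -/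

import Mathlib

/-!
For a colour sequence `c` and `m ≤ k`, the walks sought are the translates `v - S` of the set
`S` of the first `m + 1` partial sums of `c`, with `|S| ≤ 51`. Greedily one finds at least
`n / |S|²` values of `v` whose translates are pairwise disjoint, so that the events `v - S ⊆ R`
are independent, each of probability `p ^ |S| ≥ p ^ 51`. An exponential-moment (Chernoff)
bound shows that at most `51 p³⁵⁰ n / C` translates of `S` lie in `R` with probability at most
`exp (-p⁵¹ n / 10404)`, and `p⁵¹ n ≥ n ^ (649/700)` makes a union bound over the at most
`51 n⁵⁰` pairs `(m, c)` go through. When there are more such translates, a set `U` with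
`|U| ≤ p³⁵⁰ n / C` meets at most `|S| |U|` of them, so one lies in `R \ U`.
-/

open scoped Classical

/-- The probability that a `p`-random subset of the finite type `G` (each element included
independently with probability `p`) equals the finset `A`. -/
noncomputable def setProb (G : Type) [Fintype G] [DecidableEq G] (p : ℝ) (A : Finset G) : ℝ :=
  p ^ A.card * (1 - p) ^ (Fintype.card G - A.card)

/-- The partial sum `c₁ + ⋯ + cⱼ` of the first `j` entries of the tuple `c`. -/
def partialSum {G : Type} [AddCommGroup G] {k : ℕ} (c : Fin k → G) (j : ℕ) : G :=
  ∑ i ∈ Finset.univ.filter (fun i : Fin k => (i : ℕ) < j), c i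

/-- `(c₁, …, c_k)` is a path-candidate if its `k+1` partial sums are pairwise distinct. -/
def IsPathCandidate {G : Type} [AddCommGroup G] {k : ℕ} (c : Fin k → G) : Prop :=
  ∀ j j', j ≤ k → j' ≤ k → j ≠ j' → partialSum c j ≠ partialSum c j'

/-- `(c₁, …, c_k)` is a cycle-candidate if `(c₁, …, c_{k-1})` is a path-candidate and the
total sum is `0`. -/
def IsCycleCandidate {G : Type} [AddCommGroup G] {k : ℕ} (c : Fin k → G) : Prop :=
  (∀ j j', j ≤ k - 1 → j' ≤ k - 1 → j ≠ j' → partialSum c j ≠ partialSum c j') ∧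
  partialSum c k = 0

open Finset Filter Real Topology
open scoped Pointwise

section RandomSubset

variable {G : Type} [DecidableEq G]

/-- The probability that a `p`-random subset of `A` equals `B`. -/
noncomputable def subsetProb (p : ℝ) (A B : Finset G) : ℝ :=
  p ^ B.card * (1 - p) ^ (A.card - B.card)

theorem sum_powerset_subsetProb (p : ℝ) (A : Finset G) :
    ∑ B ∈ A.powerset, subsetProb p A B = 1 := by
  have h := Finset.prod_add (fun _ : G => p) (fun _ => 1 - p) A
  simp only [add_sub_cancel, prod_const, one_pow] at h
  rw [h]
  refine sum_congr rfl fun B hB => ?_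
  rw [subsetProb, card_sdiff_of_subset (mem_powerset.1 hB)]

theorem subsetProb_union {p : ℝ} {A B R₁ R₂ : Finset G} (hAB : Disjoint A B) (h₁ : R₁ ⊆ A)
    (h₂ : R₂ ⊆ B) :
    subsetProb p (A ∪ B) (R₁ ∪ R₂) = subsetProb p A R₁ * subsetProb p B R₂ := by
  have hR₁ := card_le_card h₁
  have hR₂ := card_le_card h₂
  rw [subsetProb, subsetProb, subsetProb, card_union_of_disjoint hAB,
    card_union_of_disjoint (hAB.mono h₁ h₂),
    show A.card + B.card - (R₁.card + R₂.card) = (A.card - R₁.card) + (B.card - R₂.card) by omega,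
    pow_add, pow_add]
  ring

theorem sum_powerset_union_subsetProb_mul {A B : Finset G} (hAB : Disjoint A B) (p : ℝ)
    (F : Finset G → ℝ) :
    ∑ R ∈ (A ∪ B).powerset, subsetProb p (A ∪ B) R * F R =
      ∑ R₁ ∈ A.powerset, ∑ R₂ ∈ B.powerset,
        subsetProb p A R₁ * subsetProb p B R₂ * F (R₁ ∪ R₂) := by
  rw [← sum_product']
  symm
  refine sum_nbij' (fun R => R.1 ∪ R.2) (fun R => (R ∩ A, R ∩ B)) ?_ ?_ ?_ ?_ ?_
  · simp only [mem_product, mem_powerset, and_imp, Prod.forall]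
    exact fun R₁ R₂ h₁ h₂ => union_subset_union h₁ h₂
  · simp
  · simp only [mem_product, mem_powerset, Prod.forall, Prod.mk.injEq, and_imp]
    intro R₁ R₂ h₁ h₂
    constructor
    · rw [union_inter_distrib_right, inter_eq_left.2 h₁,
        disjoint_iff_inter_eq_empty.1 (hAB.symm.mono_left h₂), union_empty]
    · rw [union_inter_distrib_right, inter_eq_left.2 h₂,
        disjoint_iff_inter_eq_empty.1 (hAB.mono_left h₁), empty_union]
  · simp only [mem_powerset]
    intro R hR
    rw [← inter_union_distrib_left, inter_eq_left.2 hR]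
  · simp only [mem_product, mem_powerset, and_imp, Prod.forall]
    intro R₁ R₂ h₁ h₂
    rw [subsetProb_union hAB h₁ h₂]

/-- Events depending on disjoint blocks of a random subset are independent. -/
theorem sum_powerset_subsetProb_mul_prod_inter {ι : Type} [DecidableEq ι] (p : ℝ)
    {V : Finset ι} {T : ι → Finset G} (hT : (V : Set ι).PairwiseDisjoint T)
    (f : ι → Finset G → ℝ) {A : Finset G} (hTA : ∀ v ∈ V, T v ⊆ A) :
    ∑ R ∈ A.powerset, subsetProb p A R * ∏ v ∈ V, f v (R ∩ T v) =
      ∏ v ∈ V, ∑ B ∈ (T v).powerset, subsetProb p (T v) B * f v B := by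
  induction V using Finset.induction_on generalizing A with
  | empty => simpa using sum_powerset_subsetProb p A
  | @insert a V ha ih =>
    rw [coe_insert, Set.pairwiseDisjoint_insert_of_notMem (by exact_mod_cast ha)] at hT
    have hdisj : ∀ v ∈ V, Disjoint (T a) (T v) := fun v hv => hT.2 v hv
    have hTa : T a ⊆ A := hTA a (mem_insert_self a V)
    have hsplit : Disjoint (T a) (A \ T a) := disjoint_sdiff
    rw [← union_sdiff_of_subset hTa, sum_powerset_union_subsetProb_mul hsplit, prod_insert ha,
      ← ih hT.1 (fun v hv => subset_sdiff.2 ⟨hTA v (mem_insert_of_mem hv), (hdisj v hv).symm⟩),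
      sum_mul_sum]
    refine sum_congr rfl fun R₁ hR₁ => sum_congr rfl fun R₂ hR₂ => ?_
    rw [mem_powerset] at hR₁ hR₂
    have h₁ : (R₁ ∪ R₂) ∩ T a = R₁ := by
      rw [union_inter_distrib_right, inter_eq_left.2 hR₁,
        disjoint_iff_inter_eq_empty.1 (hsplit.symm.mono_left hR₂), union_empty]
    have h₂ : ∀ v ∈ V, (R₁ ∪ R₂) ∩ T v = R₂ ∩ T v := fun v hv => by
      rw [union_inter_distrib_right,
        disjoint_iff_inter_eq_empty.1 ((hdisj v hv).mono_left hR₁), empty_union]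
    rw [prod_insert ha, h₁, prod_congr rfl fun v hv => congrArg (f v) (h₂ v hv)]
    ring

theorem sum_powerset_subsetProb_mul_ite_subset (p x : ℝ) (W : Finset G) :
    ∑ B ∈ W.powerset, subsetProb p W B * (if W ⊆ B then x else 1) = 1 - (1 - x) * p ^ W.card := by
  have h : ∀ B ∈ W.powerset, subsetProb p W B * (if W ⊆ B then x else 1) =
      subsetProb p W B - (1 - x) * if B = W then subsetProb p W B else 0 := by
    intro B hB
    have : W ⊆ B ↔ B = W := ⟨fun h => subset_antisymm (mem_powerset.1 hB) h, fun h => h ▸ subset_rfl⟩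
    split_ifs <;> simp_all
    ring
  rw [sum_congr rfl h, sum_sub_distrib, ← mul_sum, sum_ite_eq' _ _ (fun B => subsetProb p W B),
    if_pos (mem_powerset_self W), sum_powerset_subsetProb, subsetProb, Nat.sub_self, pow_zero,
    mul_one]

end RandomSubset

section Probability

variable {G : Type} [Fintype G] [DecidableEq G]

/-- Taking the decidability instance as an argument lets `probOf` match sums whose `if` is
decided by a non-classical instance. -/
noncomputable def probOf (p : ℝ) (E : Finset G → Prop) [DecidablePred E] : ℝ :=
  ∑ R : Finset G, if E R then setProb G p R else 0

theorem setProb_nonneg {p : ℝ} (hp0 : 0 ≤ p) (hp1 : p ≤ 1) (R : Finset G) :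
    0 ≤ setProb G p R :=
  mul_nonneg (pow_nonneg hp0 _) (pow_nonneg (sub_nonneg.2 hp1) _)

theorem setProb_eq_subsetProb (p : ℝ) (R : Finset G) :
    setProb G p R = subsetProb p (univ : Finset G) R := by
  rw [setProb, subsetProb, card_univ]

theorem sum_setProb (p : ℝ) : ∑ R : Finset G, setProb G p R = 1 := by
  simp_rw [setProb_eq_subsetProb, ← powerset_univ, sum_powerset_subsetProb]

theorem probOf_add_probOf_not (p : ℝ) (E : Finset G → Prop) [DecidablePred E] :
    probOf p E + probOf p (fun R => ¬ E R) = 1 := by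
  rw [probOf, probOf, ← sum_add_distrib, ← sum_setProb (G := G) p]
  exact sum_congr rfl fun R _ => by split_ifs <;> simp_all

theorem probOf_mono {p : ℝ} (hp0 : 0 ≤ p) (hp1 : p ≤ 1) {E F : Finset G → Prop}
    [DecidablePred E] [DecidablePred F] (h : ∀ R, E R → F R) : probOf p E ≤ probOf p F :=
  sum_le_sum fun R _ => by
    split_ifs <;> simp_all [setProb_nonneg hp0 hp1]

theorem probOf_exists_le {p : ℝ} (hp0 : 0 ≤ p) (hp1 : p ≤ 1) {ι : Type} (s : Finset ι)
    (E : ι → Finset G → Prop) [∀ i, DecidablePred (E i)]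
    [DecidablePred fun R => ∃ i ∈ s, E i R] :
    probOf p (fun R => ∃ i ∈ s, E i R) ≤ ∑ i ∈ s, probOf p (E i) := by
  have hnonneg : ∀ i R, 0 ≤ if E i R then setProb G p R else 0 := fun i R => by
    split_ifs <;> simp [setProb_nonneg hp0 hp1]
  simp only [probOf]
  rw [sum_comm]
  refine sum_le_sum fun R _ => ?_
  split_ifs with h
  · obtain ⟨i, hi, hE⟩ := h
    simpa [hE] using single_le_sum (fun i _ => hnonneg i R) hi
  · exact sum_nonneg fun i _ => hnonneg i R

theorem one_sub_probOf_le {p : ℝ} (hp0 : 0 ≤ p) (hp1 : p ≤ 1) {E F : Finset G → Prop}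
    [DecidablePred E] [DecidablePred F] (h : ∀ R, ¬ F R → E R) : 1 - probOf p F ≤ probOf p E := by
  rw [← probOf_add_probOf_not p F, add_sub_cancel_left]
  exact probOf_mono hp0 hp1 h

theorem probOf_exists_le_card_mul {p : ℝ} (hp0 : 0 ≤ p) (hp1 : p ≤ 1) {ι : Type} {s : Finset ι}
    {E : ι → Finset G → Prop} [∀ i, DecidablePred (E i)] [DecidablePred fun R => ∃ i ∈ s, E i R]
    {β : ℝ} (h : ∀ i ∈ s, probOf p (E i) ≤ β) :
    probOf p (fun R => ∃ i ∈ s, E i R) ≤ s.card * β :=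
  calc probOf p (fun R => ∃ i ∈ s, E i R) ≤ ∑ i ∈ s, probOf p (E i) := probOf_exists_le hp0 hp1 s E
    _ ≤ s.card * β := by simpa using sum_le_sum h

theorem probOf_le_sum_setProb_mul {p : ℝ} (hp0 : 0 ≤ p) (hp1 : p ≤ 1) {E : Finset G → Prop}
    [DecidablePred E]
    {f : Finset G → ℝ} (hf0 : ∀ R, 0 ≤ f R) (hf : ∀ R, E R → 1 ≤ f R) :
    probOf p E ≤ ∑ R : Finset G, setProb G p R * f R :=
  sum_le_sum fun R _ => by
    split_ifs with h
    · exact le_mul_of_one_le_right (setProb_nonneg hp0 hp1 R) (hf R h)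
    · exact mul_nonneg (setProb_nonneg hp0 hp1 R) (hf0 R)

theorem sum_setProb_mul_pow_card_filter_subset {ι : Type} [DecidableEq ι] (p x : ℝ)
    {V : Finset ι} {T : ι → Finset G} (hT : (V : Set ι).PairwiseDisjoint T) :
    ∑ R : Finset G, setProb G p R * x ^ (V.filter fun v => T v ⊆ R).card =
      ∏ v ∈ V, (1 - (1 - x) * p ^ (T v).card) := by
  have hpow : ∀ R : Finset G, x ^ (V.filter fun v => T v ⊆ R).card =
      ∏ v ∈ V, (fun v B => if T v ⊆ B then x else 1) v (R ∩ T v) := fun R => by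
    simp [← prod_const, prod_filter, subset_inter_iff]
  calc ∑ R : Finset G, setProb G p R * x ^ (V.filter fun v => T v ⊆ R).card
      = ∑ R ∈ univ.powerset, subsetProb p univ R *
          ∏ v ∈ V, (fun v B => if T v ⊆ B then x else 1) v (R ∩ T v) := by
        rw [powerset_univ]
        exact sum_congr rfl fun R _ => by rw [setProb_eq_subsetProb, hpow]
    _ = ∏ v ∈ V, ∑ B ∈ (T v).powerset, subsetProb p (T v) B * (if T v ⊆ B then x else 1) :=
        sum_powerset_subsetProb_mul_prod_inter p hT (fun v B => if T v ⊆ B then x else 1)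
          (A := univ) fun v _ => subset_univ _
    _ = _ := prod_congr rfl fun v _ => sum_powerset_subsetProb_mul_ite_subset p x (T v)

theorem one_le_exp_mul_half_pow {m : ℕ} {b : ℝ} (h : (m : ℝ) ≤ b) : 1 ≤ exp b * (1 / 2) ^ m :=
  calc (1 : ℝ) ≤ exp b * exp (-1) ^ m := by
        rw [← exp_nat_mul, ← exp_add, one_le_exp_iff]; linarith
    _ ≤ exp b * (1 / 2) ^ m := by gcongr; exact exp_neg_one_lt_half.le

theorem probOf_card_filter_subset_le {p : ℝ} (hp0 : 0 ≤ p) (hp1 : p ≤ 1) {ι : Type}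
    [DecidableEq ι] {V : Finset ι} {T : ι → Finset G} (hT : (V : Set ι).PairwiseDisjoint T)
    {s : ℕ} (hs : ∀ v ∈ V, (T v).card = s) (b : ℝ) :
    probOf p (fun R => ((V.filter fun v => T v ⊆ R).card : ℝ) ≤ b) ≤
      exp (b - p ^ s * V.card / 2) := by
  have hps : p ^ s ≤ 1 := pow_le_one₀ hp0 hp1
  calc probOf p (fun R => ((V.filter fun v => T v ⊆ R).card : ℝ) ≤ b)
      ≤ ∑ R : Finset G, setProb G p R * (exp b * (1 / 2) ^ (V.filter fun v => T v ⊆ R).card) :=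
        probOf_le_sum_setProb_mul hp0 hp1 (fun R => by positivity)
          fun R => one_le_exp_mul_half_pow
    _ = exp b * (1 - p ^ s / 2) ^ V.card := by
        have hprod : ∏ v ∈ V, (1 - (1 - 1 / 2) * p ^ (T v).card) = (1 - p ^ s / 2) ^ V.card :=
          prod_eq_pow_card fun v hv => by rw [hs v hv]; ring
        simp_rw [mul_left_comm _ (exp b), ← mul_sum, sum_setProb_mul_pow_card_filter_subset p _ hT,
          hprod]
    _ ≤ exp b * exp (-(p ^ s / 2)) ^ V.card := by
        gcongr
        · linarith
        · exact one_sub_le_exp_neg _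
    _ = exp (b - p ^ s * V.card / 2) := by
        rw [← exp_nat_mul, ← exp_add]; ring_nf

end Probability

section Translates

variable {G : Type} [AddCommGroup G] [DecidableEq G]

theorem exists_subset_pairwise_sub_notMem {D : Finset G} (h0 : 0 ∈ D) (hneg : ∀ d ∈ D, -d ∈ D)
    (A : Finset G) :
    ∃ V ⊆ A, (V : Set G).Pairwise (fun v w => v - w ∉ D) ∧ A.card ≤ D.card * V.card := by
  induction A using Finset.strongInduction with
  | H A ih =>
  rcases A.eq_empty_or_nonempty with rfl | ⟨a, ha⟩
  · exact ⟨∅, empty_subset _, by simp, by simp⟩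
  have haD : a ∈ D.image (a + ·) := mem_image.2 ⟨0, h0, add_zero a⟩
  obtain ⟨V, hVA, hV, hcard⟩ := ih (A \ D.image (a + ·))
    ((ssubset_iff_of_subset sdiff_subset).2 ⟨a, ha, fun h => (mem_sdiff.1 h).2 haD⟩)
  have hfar : ∀ v ∈ V, v - a ∉ D := fun v hv hd =>
    (mem_sdiff.1 (hVA hv)).2 (mem_image.2 ⟨v - a, hd, add_sub_cancel a v⟩)
  have haV : a ∉ V := fun h => (mem_sdiff.1 (hVA h)).2 haD
  refine ⟨insert a V, insert_subset ha (hVA.trans sdiff_subset), ?_, ?_⟩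
  · rw [coe_insert, Set.pairwise_insert]
    exact ⟨hV, fun v hv _ => ⟨fun hd => hfar v hv (by simpa using hneg _ hd), hfar v hv⟩⟩
  · have := (card_le_card_sdiff_add_card (s := A) (t := D.image (a + ·))).trans
      (add_le_add hcard card_image_le)
    rw [card_insert_of_notMem haV]
    linarith

theorem pairwiseDisjoint_image_sub {S : Finset G} {V : Set G}
    (hV : V.Pairwise fun v w => v - w ∉ S - S) : V.PairwiseDisjoint fun v => S.image (v - ·) := by
  intro v hv w hw hvw
  rw [Function.onFun, disjoint_left]
  rintro _ hx hx'
  obtain ⟨s, hs, rfl⟩ := mem_image.1 hx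
  obtain ⟨s', hs', h⟩ := mem_image.1 hx'
  rw [sub_eq_sub_iff_sub_eq_sub] at h
  exact hV hv hw hvw (Finset.mem_sub.2 ⟨s, hs, s', hs', by rw [← neg_sub, ← h, neg_sub]⟩)

def partialSums {k : ℕ} (c : Fin k → G) (m : ℕ) : Finset G :=
  (Iic m).image (partialSum c)

theorem partialSums_nonempty {k : ℕ} (c : Fin k → G) (m : ℕ) : (partialSums c m).Nonempty :=
  ⟨partialSum c 0, mem_image_of_mem _ (mem_Iic.2 (Nat.zero_le m))⟩

theorem card_partialSums_le {k : ℕ} (c : Fin k → G) (m : ℕ) : (partialSums c m).card ≤ m + 1 :=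
  card_image_le.trans (Nat.card_Iic m).le

variable [Fintype G]

def translatesIn (S R : Finset G) : Finset G :=
  univ.filter fun v => S.image (v - ·) ⊆ R

theorem exists_image_sub_subset_sdiff {S U R : Finset G}
    (h : S.card * U.card < (translatesIn S R).card) : ∃ v, S.image (v - ·) ⊆ R \ U := by
  by_contra! hno
  have hsub : translatesIn S R ⊆ U.biUnion fun u => S.image (u + ·) := by
    intro v hv
    obtain ⟨x, hx, hxRU⟩ := not_subset.1 (hno v)
    obtain ⟨s, hs, rfl⟩ := mem_image.1 hx
    have hU : v - s ∈ U := by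
      by_contra hU
      exact hxRU (mem_sdiff.2 ⟨(mem_filter.1 hv).2 hx, hU⟩)
    exact mem_biUnion.2 ⟨v - s, hU, mem_image.2 ⟨s, hs, sub_add_cancel v s⟩⟩
  have := (card_le_card hsub).trans (card_biUnion_le_card_mul U _ S.card fun u _ => card_image_le)
  rw [mul_comm] at this
  omega

theorem probOf_card_translatesIn_le {p : ℝ} (hp0 : 0 ≤ p) (hp1 : p ≤ 1) {S : Finset G}
    (hS : S.Nonempty) (b : ℝ) :
    probOf p (fun R => ((translatesIn S R).card : ℝ) ≤ b) ≤
      exp (b - p ^ S.card * Fintype.card G / (2 * S.card ^ 2)) := by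
  have hneg : ∀ d ∈ S - S, -d ∈ S - S := by
    intro d hd
    obtain ⟨x, hx, y, hy, rfl⟩ := Finset.mem_sub.1 hd
    exact Finset.mem_sub.2 ⟨y, hy, x, hx, (neg_sub x y).symm⟩
  obtain ⟨V, -, hV, hcard⟩ := exists_subset_pairwise_sub_notMem hS.zero_mem_sub hneg univ
  have hn : (Fintype.card G : ℝ) ≤ S.card ^ 2 * V.card := by
    rw [← card_univ, sq]
    exact_mod_cast hcard.trans (Nat.mul_le_mul_right _ card_sub_le)
  refine (probOf_mono hp0 hp1 fun R hR => ?_).trans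
    ((probOf_card_filter_subset_le hp0 hp1 (pairwiseDisjoint_image_sub hV)
      (fun v _ => card_image_of_injective _ sub_right_injective) b).trans (exp_le_exp.2 ?_))
  · exact (Nat.cast_le.2 (card_le_card (filter_subset_filter _ (subset_univ V)))).trans hR
  · have hS0 : (0 : ℝ) < S.card := by exact_mod_cast hS.card_pos
    have := mul_le_mul_of_nonneg_left hn (pow_nonneg hp0 S.card)
    rw [sub_le_sub_iff_left, div_le_div_iff₀ (by positivity) (by norm_num)]
    nlinarith

theorem exists_walk_of_mul_lt_card_translatesIn {k m M : ℕ} {c : Fin k → G} {t : ℝ}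
    {U R : Finset G} (hc : ∀ j j', j ≤ m → j' ≤ m → j ≠ j' → partialSum c j ≠ partialSum c j')
    (hm : m + 1 ≤ M) (hU : (U.card : ℝ) ≤ t)
    (h : M * t < (translatesIn (partialSums c m) R).card) :
    ∃ v : G, (∀ j, j ≤ m → v - partialSum c j ∈ R \ U) ∧
      (∀ j j', j ≤ m → j' ≤ m → j ≠ j' → v - partialSum c j ≠ v - partialSum c j') := by
  have hUM : ((m + 1) * U.card : ℕ) ≤ M * t := by
    push_cast
    exact mul_le_mul (by exact_mod_cast hm) hU (Nat.cast_nonneg _) (Nat.cast_nonneg _)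
  obtain ⟨v, hv⟩ := exists_image_sub_subset_sdiff
    ((Nat.mul_le_mul_right _ (card_partialSums_le c m)).trans_lt
      (by exact_mod_cast hUM.trans_lt h))
  exact ⟨v, fun j hj => hv (mem_image_of_mem _ (mem_image_of_mem _ (mem_Iic.2 hj))),
    fun j j' hj hj' hne heq => hc j j' hj hj' hne (sub_right_injective heq)⟩

end Translates

section Estimates

/-- `C = 10⁶` works because `51 / C ≤ 1 / (4 · 51²)`. -/
theorem lowerTail_exponent_le {p n : ℝ} (hp0 : 0 ≤ p) (hp1 : p ≤ 1) (hn : 0 ≤ n) {s : ℕ}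
    (hs0 : 0 < s) (hs : s ≤ 51) :
    51 * (p ^ 350 * n / 10 ^ 6) - p ^ s * n / (2 * s ^ 2) ≤ -(1 / 10404) * (p ^ 51 * n) := by
  have h350 : p ^ 350 * n ≤ p ^ 51 * n :=
    mul_le_mul_of_nonneg_right (pow_le_pow_of_le_one hp0 hp1 (by norm_num)) hn
  have hs' : (s : ℝ) ≤ 51 := by exact_mod_cast hs
  have hs0' : (0 : ℝ) < s := by exact_mod_cast hs0
  have hmean : p ^ 51 * n / 5202 ≤ p ^ s * n / (2 * s ^ 2) :=
    calc p ^ 51 * n / 5202 ≤ p ^ s * n / 5202 := by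
          gcongr ?_ * _ / _; exact pow_le_pow_of_le_one hp0 hp1 hs
      _ ≤ p ^ s * n / (2 * s ^ 2) := by
          gcongr
          nlinarith
  have : 0 ≤ p ^ 51 * n := mul_nonneg (pow_nonneg hp0 _) hn
  linarith

theorem rpow_le_pow_mul {n p a : ℝ} (hn : 0 < n) (hp : n ^ (-a) ≤ p) (k : ℕ) :
    n ^ (1 - k * a) ≤ p ^ k * n :=
  calc n ^ (1 - k * a) = (n ^ (-a)) ^ k * n := by
        rw [← rpow_natCast, ← rpow_mul hn.le, ← rpow_add_one hn.ne']
        ring_nf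
    _ ≤ p ^ k * n := by gcongr

theorem tendsto_pow_mul_exp_neg_mul_rpow_atTop_nhds_zero (K : ℕ) {a c : ℝ} (ha : 0 < a)
    (hc : 0 < c) : Tendsto (fun x : ℝ => x ^ K * exp (-c * x ^ a)) atTop (𝓝 0) := by
  refine ((tendsto_rpow_mul_exp_neg_mul_atTop_nhds_zero (K / a) c hc).comp
    (tendsto_rpow_atTop ha)).congr' ?_
  filter_upwards [eventually_ge_atTop 0] with x hx
  rw [Function.comp_apply, ← rpow_mul hx, mul_div_cancel₀ _ ha.ne', rpow_natCast]

theorem eventually_mul_pow_mul_exp_neg_mul_rpow_lt (M : ℝ) (K : ℕ) {a c δ : ℝ} (ha : 0 < a)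
    (hc : 0 < c) (hδ : 0 < δ) :
    ∀ᶠ n : ℕ in atTop, M * ((n : ℝ) ^ K * exp (-c * (n : ℝ) ^ a)) < δ := by
  have := ((tendsto_pow_mul_exp_neg_mul_rpow_atTop_nhds_zero K ha hc).comp
    tendsto_natCast_atTop_atTop).const_mul M
  rw [mul_zero] at this
  exact this.eventually (gt_mem_nhds hδ)

end Estimates

theorem probOf_few_translatesIn_partialSums_le {G : Type} [AddCommGroup G] [Fintype G]
    [DecidableEq G] {p : ℝ} (hplow : (Fintype.card G : ℝ) ^ (-(1 : ℝ) / 700) ≤ p) (hp1 : p ≤ 1)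
    {k m : ℕ} (c : Fin k → G) (hm : m ≤ 50) :
    probOf p (fun R => ((translatesIn (partialSums c m) R).card : ℝ) ≤
        51 * (p ^ 350 * Fintype.card G / 10 ^ 6)) ≤
      exp (-(1 / 10404) * (Fintype.card G : ℝ) ^ (1 - ((51 : ℕ) : ℝ) * (1 / 700))) := by
  have hn : (0 : ℝ) < Fintype.card G := by exact_mod_cast Fintype.card_pos
  have hp0 : 0 ≤ p := (rpow_nonneg hn.le _).trans hplow
  rw [neg_div] at hplow
  have := rpow_le_pow_mul hn hplow 51
  refine (probOf_card_translatesIn_le hp0 hp1 (partialSums_nonempty c m) _).trans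
    (exp_le_exp.2 ((lowerTail_exponent_le hp0 hp1 hn.le (partialSums_nonempty c m).card_pos
      ((card_partialSums_le c m).trans (by omega))).trans ?_))
  linarith

/-- Finding paths and cycles with prescribed colour sequences inside random sets,
avoiding any small forbidden set. -/
theorem paths_and_cycles_with_prescribed_colours :
    ∃ C : ℝ, 0 < C ∧ ∀ δ : ℝ, 0 < δ → ∃ N : ℕ,
      ∀ (G : Type) [AddCommGroup G] [Fintype G] [DecidableEq G], ∀ (k : ℕ) (p : ℝ),
      N ≤ Fintype.card G →
      k ≤ 50 →
      (Fintype.card G : ℝ) ^ (-(1 : ℝ) / 700) ≤ p → p ≤ 1 →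
      1 - δ ≤ ∑ R : Finset G,
        (if (∀ U : Finset G,
              ((U.card : ℝ) ≤ p ^ 350 * Fintype.card G / C) →
              (∀ c : Fin k → G, Function.Injective c → IsPathCandidate c →
                ∃ v : G,
                  (∀ j, j ≤ k → v - partialSum c j ∈ R \ U) ∧
                  (∀ j j', j ≤ k → j' ≤ k → j ≠ j' →
                    v - partialSum c j ≠ v - partialSum c j')) ∧
              (∀ c : Fin k → G, Function.Injective c → IsCycleCandidate c →
                ∃ v : G,
                  (∀ j, j ≤ k - 1 → v - partialSum c j ∈ R \ U) ∧
                  (∀ j j', j ≤ k - 1 → j' ≤ k - 1 → j ≠ j' →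
                    v - partialSum c j ≠ v - partialSum c j')))
        then setProb G p R else 0) := by
  refine ⟨10 ^ 6, by norm_num, fun δ hδ => ?_⟩
  obtain ⟨N, hN⟩ := eventually_atTop.1 (eventually_mul_pow_mul_exp_neg_mul_rpow_lt 51 50
    (a := 1 - ((51 : ℕ) : ℝ) * (1 / 700)) (c := 1 / 10404) (by norm_num) (by norm_num) hδ)
  refine ⟨N, fun G _ _ _ k p hNG hk hplow hp1 => ?_⟩
  have hp0 : 0 ≤ p := (rpow_nonneg (Nat.cast_nonneg _) _).trans hplow
  let I := range (k + 1) ×ˢ (univ : Finset (Fin k → G))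
  have hcard : (I.card : ℝ) ≤ 51 * Fintype.card G ^ 50 := by
    rw [card_product, card_range, card_univ, Fintype.card_fun, Fintype.card_fin]
    exact_mod_cast Nat.mul_le_mul (by omega) (Nat.pow_le_pow_right Fintype.card_pos hk)
  let Few : ℕ × (Fin k → G) → Finset G → Prop := fun i R =>
    ((translatesIn (partialSums i.2 i.1) R).card : ℝ) ≤ 51 * (p ^ 350 * Fintype.card G / 10 ^ 6)
  have hfew := (probOf_exists_le_card_mul hp0 hp1 (s := I) (E := Few) fun i hi =>
    probOf_few_translatesIn_partialSums_le hplow hp1 i.2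
      ((Nat.lt_succ_iff.1 (mem_range.1 (mem_product.1 hi).1)).trans hk)).trans
    (mul_le_mul_of_nonneg_right hcard (exp_nonneg _))
  refine le_trans ?_ (one_sub_probOf_le hp0 hp1 (F := fun R => ∃ i ∈ I, Few i R)
    fun R hR U hU => ?_)
  · linarith [hN _ hNG]
  · have hmany : ∀ m ≤ k, ∀ c : Fin k → G, 51 * (p ^ 350 * Fintype.card G / 10 ^ 6) <
        (translatesIn (partialSums c m) R).card := fun m hm c => not_le.1 fun h =>
      hR ⟨(m, c), mem_product.2 ⟨mem_range.2 (by omega), mem_univ c⟩, h⟩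
    exact ⟨fun c _ hc => exists_walk_of_mul_lt_card_translatesIn (M := 51) hc (by omega) hU
        (hmany k le_rfl c),
      fun c _ hc => exists_walk_of_mul_lt_card_translatesIn (M := 51) hc.1 (by omega) hU
        (hmany (k - 1) (Nat.sub_le k 1) c)⟩
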